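/- For S ∈ F^{np×qr} and permutation matrices interchanging two indices, Λ_{(n,q)}^{(p,r)}((P_{i₁,i₂} ⊗ P_{k₁,k₂}) S (P_{j₁,j₂} ⊗ P_{l₁,l₂})) = (P_{i₁,i₂} ⊗ P_{j₁,j₂}) Λ_{(n,q)}^{(p,r)}(S) (P_{k₁,k₂} ⊗ P_{l₁,l₂}), where 1 ≤ i₁,i₂ ≤ n, 1 ≤ j₁,j₂ ≤ q, 1 ≤ k₁,k₂ ≤ p, 1 ≤ l₁,l₂ ≤ r. -/

import Mathlib

/-!
Every `swapMat` is the permutation matrix of a transposition, and the Kronecker product of two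
permutation matrices is the permutation matrix of the product permutation, so both sides of the
identity are obtained from `S` by reindexing rows and columns along products of transpositions
(which are their own inverses). `Lam` only relabels entries, so it commutes with such a
reindexing, each factor moving to the position its index occupies in `Lam`.
-/

open Matrix
open scoped Kronecker

/-- The permutation matrix interchanging rows/columns a and b. -/
def swapMat {F : Type*} [Zero F] [One F] {n : ℕ} (a b : Fin n) :
    Matrix (Fin n) (Fin n) F :=
  fun i j => if j = Equiv.swap a b i then 1 else 0

/-- The matrix reordering Λ_{(n,q)}^{(p,r)}. -/
def Lam {F : Type*} (n q p r : ℕ)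
    (S : Matrix (Fin p × Fin n) (Fin r × Fin q) F) :
    Matrix (Fin q × Fin n) (Fin r × Fin p) F :=
  fun a b => S (b.2, a.2) (b.1, a.1)

section

variable {R : Type*}

lemma swapMat_eq_permMatrix [Zero R] [One R] {n : ℕ} (a b : Fin n) :
    (swapMat a b : Matrix (Fin n) (Fin n) R) = (Equiv.swap a b).permMatrix R := by
  ext i j
  simp [swapMat, PEquiv.toMatrix_apply, eq_comm]

lemma kronecker_permMatrix [MulZeroOneClass R] {m n : Type*} [DecidableEq m] [DecidableEq n]
    (σ : Equiv.Perm m) (τ : Equiv.Perm n) :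
    σ.permMatrix R ⊗ₖ τ.permMatrix R = Equiv.Perm.permMatrix R (σ.prodCongr τ) := by
  ext ⟨i, j⟩ ⟨i', j'⟩
  simp [PEquiv.toMatrix_apply, ← ite_and, and_comm]

/-- On plain `Matrix` types, `*` can elaborate through the `CStarMatrix` multiplication
(a default instance); it is definitionally matrix multiplication. -/
lemma cstarMatrix_hMul_eq_mul [Mul R] [AddCommMonoid R] {l m n : Type*} [Fintype m]
    (A : Matrix l m R) (B : Matrix m n R) :
    @HMul.hMul (Matrix l m R) (Matrix m n R) (Matrix l n R)
      CStarMatrix.instHMulOfFintypeOfMulOfAddCommMonoid A B = A * B :=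
  rfl

end

lemma Lam_submatrix {F : Type*} {n q p r : ℕ} (S : Matrix (Fin p × Fin n) (Fin r × Fin q) F)
    (σ : Fin p → Fin p) (τ : Fin n → Fin n) (ρ : Fin r → Fin r) (υ : Fin q → Fin q) :
    Lam n q p r (S.submatrix (Prod.map σ τ) (Prod.map ρ υ)) =
      (Lam n q p r S).submatrix (Prod.map υ τ) (Prod.map ρ σ) :=
  rfl

/-- Λ((P_{i₁,i₂} ⊗ P_{k₁,k₂}) S (P_{j₁,j₂} ⊗ P_{l₁,l₂}))
= (P_{i₁,i₂} ⊗ P_{j₁,j₂}) Λ(S) (P_{k₁,k₂} ⊗ P_{l₁,l₂}), with indices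
i ∈ [n], j ∈ [q], k ∈ [p], l ∈ [r] (Kronecker factors ordered to match the
block row/column index conventions). -/
theorem stmt11 {F : Type*} [Field F] {n q p r : ℕ}
    (S : Matrix (Fin p × Fin n) (Fin r × Fin q) F)
    (i₁ i₂ : Fin n) (j₁ j₂ : Fin q) (k₁ k₂ : Fin p) (l₁ l₂ : Fin r) :
    Lam n q p r ((swapMat (F := F) k₁ k₂ ⊗ₖ swapMat (F := F) i₁ i₂) * S * (swapMat l₁ l₂ ⊗ₖ swapMat j₁ j₂)) =
      (swapMat (F := F) j₁ j₂ ⊗ₖ swapMat (F := F) i₁ i₂) * Lam n q p r S * (swapMat l₁ l₂ ⊗ₖ swapMat k₁ k₂) := by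
  simp only [cstarMatrix_hMul_eq_mul, swapMat_eq_permMatrix, kronecker_permMatrix,
    PEquiv.toMatrix_toPEquiv_mul, PEquiv.mul_toMatrix_toPEquiv, Equiv.prodCongr_symm,
    Equiv.symm_swap, Matrix.submatrix_submatrix]
  exact Lam_submatrix S _ _ _ _
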